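/- Let G be a finite group of even order and d ≥ 2, and T = ker(Tr : (ℤ/2^dℤ)[G] → ℤ/2^{d-1}ℤ). Then the G-invariants of T/2T have 𝔽₂-dimension at least 2; in particular T/2T is not isomorphic to 𝔽₂[G] as a G-module (whose invariants are 1-dimensional). -/

import Mathlib

/-- The augmentation (coefficient-sum) ring homomorphism on a group algebra. -/
noncomputable def aug (k : Type*) (G : Type*) [CommRing k] [Monoid G] :
    MonoidAlgebra k G →+* k :=
  ((MonoidAlgebra.lift k k G) 1).toRingHom

/-- The trace map `Tr : (ℤ/mℤ)[G] → ℤ/kℤ` (for `k ∣ m`) sending `Σ a_g [g]` to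
`Σ a_g mod k`. -/
noncomputable def trMap (G : Type*) [Monoid G] (m k : ℕ) (h : k ∣ m) :
    MonoidAlgebra (ZMod m) G →+* ZMod k :=
  (ZMod.castHom h (ZMod k)).comp (aug (ZMod m) G)

/-- `T = ker(Tr : (ℤ/2^dℤ)[G] → ℤ/2^{d-1}ℤ)`. -/
noncomputable def TId (G : Type*) [Group G] (d : ℕ) :
    Ideal (MonoidAlgebra (ZMod (2 ^ d)) G) :=
  RingHom.ker (trMap G (2 ^ d) (2 ^ (d - 1)) (pow_dvd_pow 2 (Nat.sub_le d 1)))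

/-- The quotient module `T/2T`. -/
noncomputable abbrev TQuot (G : Type*) [Group G] (d : ℕ) :=
  (TId G d) ⧸ LinearMap.range
    (2 : Module.End (MonoidAlgebra (ZMod (2 ^ d)) G) (TId G d))

lemma aug_single {k G : Type*} [CommRing k] [Monoid G] (g : G) (c : k) :
    aug k G (MonoidAlgebra.single g c) = c := by
  simp [aug]

lemma end_two_apply {R M : Type*} [Semiring R] [AddCommMonoid M] [Module R M]
    (x : M) : (2 : Module.End R M) x = x + x := by
  have h : (2 : Module.End R M) = 1 + 1 := one_add_one_eq_two.symm
  rw [h, LinearMap.add_apply]; rfl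

lemma mem_TId {G : Type*} [Group G] {d : ℕ} (x : MonoidAlgebra (ZMod (2^d)) G) :
    x ∈ TId G d ↔ ZMod.castHom (pow_dvd_pow 2 (Nat.sub_le d 1)) (ZMod (2^(d-1)))
      (aug (ZMod (2^d)) G x) = 0 := by
  rw [TId, RingHom.mem_ker]; rfl

lemma zmod_two_c {d : ℕ} (hd : 1 ≤ d) {c : ZMod (2^d)}
    (h : ZMod.castHom (pow_dvd_pow 2 (Nat.sub_le d 1)) (ZMod (2^(d-1))) c = 0) :
    c + c = 0 := by
  haveI : NeZero (2^d) := ⟨by positivity⟩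
  rw [ZMod.castHom_apply, ← ZMod.natCast_val, ZMod.natCast_eq_zero_iff] at h
  obtain ⟨j, hj⟩ := h
  have hc : c = ((c.val : ℕ) : ZMod (2^d)) := (ZMod.natCast_rightInverse c).symm
  rw [hc, ← Nat.cast_add, hj, ← two_mul, ← mul_assoc, ← pow_succ']
  have : d - 1 + 1 = d := by omega
  rw [this, Nat.cast_mul, ZMod.natCast_self, zero_mul]

/-- Let `G` be a finite group of even order, `d ≥ 2`, and
`T = ker(Tr : (ℤ/2^dℤ)[G] → ℤ/2^{d-1}ℤ)`.  Then the `G`-invariants of `T/2T` have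
`𝔽₂`-dimension at least 2 (i.e. there are two distinct nonzero invariant elements);
in particular `T/2T` is not isomorphic to `𝔽₂[G]` as a `G`-module. -/
theorem stmt7 {G : Type*} [Group G] [Fintype G] (d : ℕ) (hd : 2 ≤ d)
    (heven : Even (Nat.card G)) :
    (∃ a b : TQuot G d, a ≠ 0 ∧ b ≠ 0 ∧ a ≠ b ∧
      (∀ g : G, (MonoidAlgebra.of (ZMod (2 ^ d)) G g) • a = a) ∧
      (∀ g : G, (MonoidAlgebra.of (ZMod (2 ^ d)) G g) • b = b)) ∧
    ¬ ∃ e : TQuot G d ≃+ MonoidAlgebra (ZMod 2) G, ∀ (g : G) (x : TQuot G d),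
      e ((MonoidAlgebra.of (ZMod (2 ^ d)) G g) • x) =
        MonoidAlgebra.of (ZMod 2) G g * e x := by
  haveI : NeZero (2^d) := ⟨by positivity⟩
  obtain ⟨k, hk⟩ := heven
  rw [Nat.card_eq_fintype_card] at hk
  have hcard : 1 < Fintype.card G := by
    have h1 : 0 < Fintype.card G := Fintype.card_pos
    omega
  obtain ⟨g₀, hg₀⟩ := Fintype.exists_ne_of_one_lt_card hcard 1
  set A := MonoidAlgebra (ZMod (2^d)) G with hA
  let u : A := MonoidAlgebra.single 1 ((2^(d-1) : ℕ) : ZMod (2^d))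
  let N : A := ∑ g : G, MonoidAlgebra.single g (1 : ZMod (2^d))
  let w : A := N - MonoidAlgebra.single (1:G) ((Fintype.card G : ℕ) : ZMod (2^d))
  have augN : aug (ZMod (2^d)) G N = ((Fintype.card G : ℕ) : ZMod (2^d)) := by
    rw [map_sum]
    simp [aug_single]
  have augu : aug (ZMod (2^d)) G u = ((2^(d-1):ℕ) : ZMod (2^d)) := aug_single _ _
  have augw : aug (ZMod (2^d)) G w = 0 := by
    rw [map_sub, augN, aug_single, sub_self]
  have hmemzero : ∀ x : A, aug (ZMod (2^d)) G x = 0 → x ∈ TId G d := fun x hx => by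
    rw [mem_TId, hx, map_zero]
  have hu : u ∈ TId G d := by
    rw [mem_TId, augu, map_natCast, ZMod.natCast_self]
  have hw : w ∈ TId G d := hmemzero w augw
  set P := LinearMap.range (2 : Module.End A (TId G d)) with hP
  have hrange : ∀ x : TId G d, x ∈ P ↔
      ∃ t : TId G d, (t : A) + (t : A) = (x : A) := by
    intro x
    rw [hP, LinearMap.mem_range]
    constructor
    · rintro ⟨t, ht⟩
      refine ⟨t, ?_⟩
      rw [← ht, end_two_apply]
      rfl
    · rintro ⟨t, ht⟩
      refine ⟨t, ?_⟩
      apply Subtype.ext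
      rw [end_two_apply]
      exact ht
  have keyA : ∀ x : TId G d, x ∈ P → aug (ZMod (2^d)) G (x : A) = 0 := by
    intro x hx
    obtain ⟨t, ht⟩ := (hrange x).mp hx
    have h2 := zmod_two_c (by omega) ((mem_TId (t : A)).mp t.2)
    rw [← ht, map_add, h2]
  have h2pow : ((2^(d-1):ℕ) : ZMod (2^d)) ≠ 0 := by
    rw [Ne, ZMod.natCast_eq_zero_iff]
    intro hdvd
    have hle := Nat.le_of_dvd (by positivity) hdvd
    have hlt : (2:ℕ)^(d-1) < 2^d := Nat.pow_lt_pow_right one_lt_two (by omega)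
    omega
  set a : TQuot G d := Submodule.Quotient.mk (⟨u, hu⟩ : TId G d) with ha
  set b : TQuot G d := Submodule.Quotient.mk (⟨w, hw⟩ : TId G d) with hb
  have ha0 : a ≠ 0 := by
    rw [ha, Ne, Submodule.Quotient.mk_eq_zero]
    intro hmem
    have := keyA _ hmem
    rw [show ((⟨u, hu⟩ : TId G d) : A) = u from rfl, augu] at this
    exact h2pow this
  have hab : a ≠ b := by
    rw [ha, hb, Ne, Submodule.Quotient.eq]
    intro hmem
    have := keyA _ hmem
    rw [show ((⟨u, hu⟩ - ⟨w, hw⟩ : TId G d) : A) = u - w from rfl,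
      map_sub, augu, augw, sub_zero] at this
    exact h2pow this
  have hNapp : N.coeff g₀ = 1 := by
    classical
    rw [show N = ∑ g : G, MonoidAlgebra.single g (1 : ZMod (2^d)) from rfl]
    rw [MonoidAlgebra.coeff_sum, Finset.sum_apply']
    simp [Finsupp.single_apply]
  have hb0 : b ≠ 0 := by
    rw [hb, Ne, Submodule.Quotient.mk_eq_zero]
    intro hmem
    obtain ⟨t, ht⟩ := (hrange _).mp hmem
    rw [show ((⟨w, hw⟩ : TId G d) : A) = w from rfl] at ht
    have hev : (↑t : A).coeff g₀ + (↑t : A).coeff g₀ = w.coeff g₀ := by rw [← ht]; rfl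
    have hw0 : w.coeff g₀ = 1 := by
      rw [show w = N - MonoidAlgebra.single (1:G) ((Fintype.card G : ℕ) : ZMod (2^d)) from rfl]
      erw [MonoidAlgebra.coeff_sub, Finsupp.sub_apply, hNapp, MonoidAlgebra.coeff_single,
        Finsupp.single_eq_of_ne' (fun h => hg₀ h.symm), sub_zero]
    rw [hw0] at hev
    have hd2 : (2:ℕ) ∣ 2^d := dvd_pow_self 2 (by omega)
    have := congrArg (ZMod.castHom hd2 (ZMod 2)) hev
    rw [map_add, map_one] at this
    have hzz : ∀ y : ZMod 2, y + y = 0 := by decide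
    rw [hzz] at this
    exact absurd this (by decide)
  -- invariance of a
  have hcoeff : ((2:ℕ)^(d-2) + 2^(d-2)) = 2^(d-1) := by
    rw [← two_mul, ← pow_succ']
    congr 1
    omega
  have hainv : ∀ g : G, (MonoidAlgebra.of (ZMod (2 ^ d)) G g) • a = a := by
    intro g
    rw [ha, ← Submodule.Quotient.mk_smul, Submodule.Quotient.eq]
    refine (hrange _).mpr ⟨⟨MonoidAlgebra.single g ((2^(d-2):ℕ) : ZMod (2^d)) -
      MonoidAlgebra.single 1 ((2^(d-2):ℕ) : ZMod (2^d)),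
      hmemzero _ (by rw [map_sub, aug_single, aug_single, sub_self])⟩, ?_⟩
    have hcoe : ((MonoidAlgebra.of (ZMod (2 ^ d)) G g • ⟨u, hu⟩ - ⟨u, hu⟩ : TId G d) : A)
        = MonoidAlgebra.of (ZMod (2 ^ d)) G g * u - u := rfl
    rw [hcoe]
    rw [show (MonoidAlgebra.of (ZMod (2 ^ d)) G g * u : A)
        = MonoidAlgebra.single g ((2^(d-1):ℕ) : ZMod (2^d)) by
      rw [MonoidAlgebra.of_apply, MonoidAlgebra.single_mul_single, one_mul, mul_one]]
    show (_ - _) + (_ - _) = _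
    rw [sub_add_sub_comm, ← MonoidAlgebra.single_add, ← MonoidAlgebra.single_add, ← Nat.cast_add, hcoeff]
  have hgN : ∀ g : G, MonoidAlgebra.of (ZMod (2^d)) G g * N = N := by
    intro g
    rw [show N = ∑ h : G, MonoidAlgebra.single h (1 : ZMod (2^d)) from rfl, Finset.mul_sum]
    simp only [MonoidAlgebra.of_apply, MonoidAlgebra.single_mul_single, one_mul]
    exact Fintype.sum_equiv (Equiv.mulLeft g) _ _ (fun h => rfl)
  have hbinv : ∀ g : G, (MonoidAlgebra.of (ZMod (2 ^ d)) G g) • b = b := by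
    intro g
    rw [hb, ← Submodule.Quotient.mk_smul, Submodule.Quotient.eq]
    refine (hrange _).mpr ⟨⟨MonoidAlgebra.single 1 ((k:ℕ) : ZMod (2^d)) -
      MonoidAlgebra.single g ((k:ℕ) : ZMod (2^d)),
      hmemzero _ (by rw [map_sub, aug_single, aug_single, sub_self])⟩, ?_⟩
    have hcoe : ((MonoidAlgebra.of (ZMod (2 ^ d)) G g • ⟨w, hw⟩ - ⟨w, hw⟩ : TId G d) : A)
        = MonoidAlgebra.of (ZMod (2 ^ d)) G g * w - w := rfl
    rw [hcoe]
    have hgw : MonoidAlgebra.of (ZMod (2 ^ d)) G g * w - w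
        = MonoidAlgebra.single (1:G) ((Fintype.card G : ℕ) : ZMod (2^d))
          - MonoidAlgebra.single g ((Fintype.card G : ℕ) : ZMod (2^d)) := by
      rw [show w = N - MonoidAlgebra.single (1:G) ((Fintype.card G : ℕ) : ZMod (2^d)) from rfl]
      rw [mul_sub, hgN g, MonoidAlgebra.of_apply, MonoidAlgebra.single_mul_single, one_mul,
        mul_one]
      abel
    rw [hgw]
    show (_ - _) + (_ - _) = _
    rw [sub_add_sub_comm, ← MonoidAlgebra.single_add, ← MonoidAlgebra.single_add, ← Nat.cast_add, ← hk]
  constructor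
  · exact ⟨a, b, ha0, hb0, hab, hainv, hbinv⟩
  · rintro ⟨e, he⟩
    have hconst : ∀ x : MonoidAlgebra (ZMod 2) G,
        (∀ g : G, MonoidAlgebra.of (ZMod 2) G g * x = x) → ∀ h : G, x.coeff h = x.coeff 1 := by
      intro x hx h
      conv_lhs => rw [← hx h]
      rw [MonoidAlgebra.of_apply, MonoidAlgebra.coeff_single_mul_apply, one_mul, inv_mul_cancel]
    have hEa : ∀ g : G, MonoidAlgebra.of (ZMod 2) G g * e a = e a := fun g => by
      rw [← he g a, hainv g]
    have hEb : ∀ g : G, MonoidAlgebra.of (ZMod 2) G g * e b = e b := fun g => by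
      rw [← he g b, hbinv g]
    have hone : ∀ c : ZMod 2, c ≠ 0 → c = 1 := by decide
    have hea1 : (e a).coeff 1 ≠ 0 := by
      intro h0
      apply ha0
      rw [← AddEquiv.map_eq_zero_iff e]
      exact MonoidAlgebra.ext (Finsupp.ext fun h => by rw [hconst _ hEa h, h0]; rfl)
    have heb1 : (e b).coeff 1 ≠ 0 := by
      intro h0
      apply hb0
      rw [← AddEquiv.map_eq_zero_iff e]
      exact MonoidAlgebra.ext (Finsupp.ext fun h => by rw [hconst _ hEb h, h0]; rfl)
    apply hab
    apply e.injective
    exact MonoidAlgebra.ext (Finsupp.ext fun h => by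
      rw [hconst _ hEa h, hconst _ hEb h, hone _ hea1, hone _ heb1])
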